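/- The regular contingency logic R^Δ is strongly complete with respect to the class of quasi-filters: every R^Δ-consistent set of formulas is satisfiable at some state of some neighborhood model whose neighborhood function at every state is closed under supersets and closed under binary intersections. -/

import Mathlib

/-- The language L(Δ) of contingency logic: φ ::= p | ¬φ | (φ ∧ φ) | Δφ. -/
inductive Formula (P : Type) : Type
  | atom : P → Formula P
  | neg : Formula P → Formula P
  | and : Formula P → Formula P → Formula P
  | delta : Formula P → Formula P

namespace Formula

variable {P : Type}

/-- φ ∨ ψ abbreviates ¬(¬φ ∧ ¬ψ). -/
def or (φ ψ : Formula P) : Formula P := neg (and (neg φ) (neg ψ))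

/-- φ → ψ abbreviates ¬(φ ∧ ¬ψ). -/
def imp (φ ψ : Formula P) : Formula P := neg (and φ (neg ψ))

/-- φ ↔ ψ abbreviates (φ → ψ) ∧ (ψ → φ). -/
def iffF (φ ψ : Formula P) : Formula P := and (imp φ ψ) (imp ψ φ)

end Formula

/-- ⊤ : a fixed tautology (p ∨ ¬p for a fixed propositional variable p). -/
noncomputable def Formula.top (P : Type) [Nonempty P] : Formula P :=
  Formula.or (Formula.atom (Classical.arbitrary P))
    (Formula.neg (Formula.atom (Classical.arbitrary P)))

/-- A neighborhood model ⟨S, N, V⟩: a nonempty set of states `S`, a neighborhood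
function `N : S → P(P(S))` and a valuation `V`. -/
structure NbhdModel (P : Type) where
  S : Type
  nonempty : Nonempty S
  N : S → Set (Set S)
  V : P → Set S

/-- The truth set ⟦φ⟧ of a formula in a neighborhood model; the clause for `Δφ` says
that a state `s` satisfies `Δφ` iff ⟦φ⟧ ∈ N(s) or S ∖ ⟦φ⟧ ∈ N(s). -/
def NbhdModel.truthSet {P : Type} (M : NbhdModel P) : Formula P → Set M.S
  | .atom p => M.V p
  | .neg φ => (M.truthSet φ)ᶜ
  | .and φ ψ => M.truthSet φ ∩ M.truthSet ψ
  | .delta φ => {s | M.truthSet φ ∈ M.N s ∨ (M.truthSet φ)ᶜ ∈ M.N s}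

/-- Satisfaction: M,s ⊨ φ. -/
def NbhdModel.sat {P : Type} (M : NbhdModel P) (s : M.S) (φ : Formula P) : Prop :=
  s ∈ M.truthSet φ

/-- Frame property (m): closure under supersets. -/
def SupersetClosed {S : Type} (N : S → Set (Set S)) : Prop :=
  ∀ s : S, ∀ X Y : Set S, X ∈ N s → X ⊆ Y → Y ∈ N s

/-- Frame property (c): closure under binary intersections. -/
def InterClosed {S : Type} (N : S → Set (Set S)) : Prop :=
  ∀ s : S, ∀ X Y : Set S, X ∈ N s → Y ∈ N s → X ∩ Y ∈ N s

/-- Frame property (n): contains the unit. -/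
def ContainsUnit {S : Type} (N : S → Set (Set S)) : Prop :=
  ∀ s : S, (Set.univ : Set S) ∈ N s

/-- Frame property (z): closure under complements. -/
def ComplClosed {S : Type} (N : S → Set (Set S)) : Prop :=
  ∀ s : S, ∀ X : Set S, X ∈ N s → Xᶜ ∈ N s

/-- The supplementation of a neighborhood function:
`N⁺(s) = {X ⊆ S : Y ⊆ X for some Y ∈ N(s)}`. -/
def suppN {S : Type} (N : S → Set (Set S)) (s : S) : Set (Set S) :=
  {X | ∃ Y ∈ N s, Y ⊆ X}

/-- `φ` is a substitution instance of a propositional tautology: every Boolean valuation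
of formulas that respects `¬` and `∧` (treating atoms and Δ-formulas as atomic) makes
`φ` true. -/
def Tautology {P : Type} (φ : Formula P) : Prop :=
  ∀ v : Formula P → Bool,
    (∀ ψ, v (Formula.neg ψ) = !(v ψ)) →
    (∀ ψ χ, v (Formula.and ψ χ) = (v ψ && v χ)) →
    v φ = true

/-- Derivability in the system E^Δ (TAUT + ΔEqu + MP + REΔ) extended with the
additional axioms in `Ax`. -/
inductive Deriv {P : Type} (Ax : Set (Formula P)) : Formula P → Prop
  | ax {φ} (h : φ ∈ Ax) : Deriv Ax φ
  | taut {φ} (h : Tautology φ) : Deriv Ax φ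
  | equ (φ) : Deriv Ax (Formula.iffF (Formula.delta φ) (Formula.delta (Formula.neg φ)))
  | mp {φ ψ} (h1 : Deriv Ax (Formula.imp φ ψ)) (h2 : Deriv Ax φ) : Deriv Ax ψ
  | re {φ ψ} (h : Deriv Ax (Formula.iffF φ ψ)) :
      Deriv Ax (Formula.iffF (Formula.delta φ) (Formula.delta ψ))

/-- Derivability of `φ` from the set of premises `Γ` in the system E^Δ + `Ax`. -/
inductive DerivFrom {P : Type} (Ax Γ : Set (Formula P)) : Formula P → Prop
  | mem {φ} (h : φ ∈ Γ) : DerivFrom Ax Γ φ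
  | thm {φ} (h : Deriv Ax φ) : DerivFrom Ax Γ φ
  | mp {φ ψ} (h1 : DerivFrom Ax Γ (Formula.imp φ ψ)) (h2 : DerivFrom Ax Γ φ) :
      DerivFrom Ax Γ ψ

/-- `Γ` is consistent in the system E^Δ + `Ax`: no contradiction is derivable from `Γ`. -/
def Consistent {P : Type} (Ax Γ : Set (Formula P)) : Prop :=
  ¬ ∃ φ : Formula P, DerivFrom Ax Γ φ ∧ DerivFrom Ax Γ (Formula.neg φ)

/-- The axiom ΔM: all instances of Δφ → Δ(φ ∨ ψ) ∨ Δ(¬φ ∨ χ). -/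
def AxDeltaM {P : Type} : Set (Formula P) :=
  {f | ∃ φ ψ χ : Formula P,
     f = Formula.imp (Formula.delta φ)
           (Formula.or (Formula.delta (Formula.or φ ψ))
                       (Formula.delta (Formula.or (Formula.neg φ) χ)))}

/-- The axiom ΔC: all instances of (Δφ ∧ Δψ) → Δ(φ ∧ ψ). -/
def AxDeltaC {P : Type} : Set (Formula P) :=
  {f | ∃ φ ψ : Formula P,
     f = Formula.imp (Formula.and (Formula.delta φ) (Formula.delta ψ))
           (Formula.delta (Formula.and φ ψ))}

/-- The axiom ΔN: Δ⊤. -/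
noncomputable def AxDeltaN (P : Type) [Nonempty P] : Set (Formula P) :=
  {Formula.delta (Formula.top P)}

/-! Proof idea: the canonical model. Its states are the maximal consistent sets, and a
set `X` of states is a neighbourhood of `s` iff it contains the proof set `|φ|` of some
`φ` with `Δ(φ ∨ ψ) ∈ s` for every `ψ`. Such sets are closed under supersets by construction
and under binary intersections by ΔC (applied to `Δφ, Δψ` and to
`Δ(φ ∨ χ), Δ(ψ ∨ χ)`). In the truth lemma, `Δχ ∈ s` yields `|χ|` itself as a
neighbourhood unless some `Δ(χ ∨ ψ₀) ∉ s`; then ΔM forces `Δ(¬χ ∨ ψ) ∈ s` for all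
`ψ`, so `|¬χ| = |χ|ᶜ` is one. -/

namespace Formula

variable {P : Type}

namespace Tautology

theorem imp_self (φ : Formula P) : Tautology (φ.imp φ) := by
  intro v hn ha; simp only [imp, hn, ha]; cases v φ <;> rfl

theorem imp_imp_left (φ ψ : Formula P) : Tautology (φ.imp (ψ.imp φ)) := by
  intro v hn ha; simp only [imp, hn, ha]; cases v φ <;> cases v ψ <;> rfl

theorem imp_distrib (φ ψ χ : Formula P) :
    Tautology ((φ.imp (ψ.imp χ)).imp ((φ.imp ψ).imp (φ.imp χ))) := by
  intro v hn ha; simp only [imp, hn, ha]; cases v φ <;> cases v ψ <;> cases v χ <;> rfl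

theorem not_intro (φ ψ : Formula P) :
    Tautology ((φ.imp ψ).imp ((φ.imp ψ.neg).imp φ.neg)) := by
  intro v hn ha; simp only [imp, hn, ha]; cases v φ <;> cases v ψ <;> rfl

theorem not_not_elim (φ : Formula P) : Tautology (φ.neg.neg.imp φ) := by
  intro v hn ha; simp only [imp, hn, ha]; cases v φ <;> rfl

theorem and_left (φ ψ : Formula P) : Tautology ((φ.and ψ).imp φ) := by
  intro v hn ha; simp only [imp, hn, ha]; cases v φ <;> cases v ψ <;> rfl

theorem and_right (φ ψ : Formula P) : Tautology ((φ.and ψ).imp ψ) := by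
  intro v hn ha; simp only [imp, hn, ha]; cases v φ <;> cases v ψ <;> rfl

theorem and_intro (φ ψ : Formula P) : Tautology (φ.imp (ψ.imp (φ.and ψ))) := by
  intro v hn ha; simp only [imp, hn, ha]; cases v φ <;> cases v ψ <;> rfl

end Tautology

end Formula

open Formula

section Completeness

variable {P : Type} {Ax Γ : Set (Formula P)} {φ ψ χ : Formula P}

namespace DerivFrom

theorem mono {Γ' : Set (Formula P)} (h : DerivFrom Ax Γ φ) (hsub : Γ ⊆ Γ') :
    DerivFrom Ax Γ' φ := by
  induction h with
  | mem h => exact .mem (hsub h)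
  | thm h => exact .thm h
  | mp _ _ ih₁ ih₂ => exact .mp ih₁ ih₂

theorem exists_mem_of_sUnion {c : Set (Set (Formula P))} (hne : c.Nonempty)
    (hdir : DirectedOn (· ⊆ ·) c) (h : DerivFrom Ax (⋃₀ c) φ) :
    ∃ t ∈ c, DerivFrom Ax t φ := by
  induction h with
  | mem h =>
    obtain ⟨t, ht, hφ⟩ := h
    exact ⟨t, ht, .mem hφ⟩
  | thm h =>
    obtain ⟨t, ht⟩ := hne
    exact ⟨t, ht, .thm h⟩
  | mp _ _ ih₁ ih₂ =>
    obtain ⟨t₁, ht₁, h₁⟩ := ih₁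
    obtain ⟨t₂, ht₂, h₂⟩ := ih₂
    obtain ⟨t, ht, h₁t, h₂t⟩ := hdir t₁ ht₁ t₂ ht₂
    exact ⟨t, ht, .mp (h₁.mono h₁t) (h₂.mono h₂t)⟩

theorem deduction (h : DerivFrom Ax (insert ψ Γ) φ) : DerivFrom Ax Γ (ψ.imp φ) := by
  induction h with
  | @mem φ h =>
    rcases h with rfl | h
    · exact .thm (.taut (Tautology.imp_self _))
    · exact .mp (.thm (.taut (Tautology.imp_imp_left φ ψ))) (.mem h)
  | @thm φ h => exact .mp (.thm (.taut (Tautology.imp_imp_left φ ψ))) (.thm h)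
  | mp _ _ ih₁ ih₂ => exact .mp (.mp (.thm (.taut (Tautology.imp_distrib _ _ _))) ih₁) ih₂

theorem neg_of_not_consistent_insert (h : ¬ Consistent Ax (insert φ Γ)) :
    DerivFrom Ax Γ φ.neg := by
  obtain ⟨χ, h₁, h₂⟩ := not_not.1 h
  exact .mp (.mp (.thm (.taut (Tautology.not_intro φ χ))) h₁.deduction) h₂.deduction

theorem deriv_of_empty (h : DerivFrom Ax ∅ φ) : Deriv Ax φ := by
  induction h with
  | mem h => exact absurd h (Set.notMem_empty _)
  | thm h => exact h
  | mp _ _ ih₁ ih₂ => exact .mp ih₁ ih₂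

end DerivFrom

theorem Consistent.sUnion {c : Set (Set (Formula P))} (hne : c.Nonempty)
    (hdir : DirectedOn (· ⊆ ·) c) (hc : ∀ t ∈ c, Consistent Ax t) :
    Consistent Ax (⋃₀ c) := by
  rintro ⟨φ, h₁, h₂⟩
  obtain ⟨t₁, ht₁, h₁⟩ := h₁.exists_mem_of_sUnion hne hdir
  obtain ⟨t₂, ht₂, h₂⟩ := h₂.exists_mem_of_sUnion hne hdir
  obtain ⟨t, ht, h₁t, h₂t⟩ := hdir t₁ ht₁ t₂ ht₂
  exact hc t ht ⟨φ, h₁.mono h₁t, h₂.mono h₂t⟩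

def MCS (Ax s : Set (Formula P)) : Prop :=
  Consistent Ax s ∧ ∀ φ : Formula P, φ ∈ s ∨ φ.neg ∈ s

namespace MCS

variable {s : Set (Formula P)} (hs : MCS Ax s)
include hs

theorem mem_of_derivFrom (h : DerivFrom Ax s φ) : φ ∈ s :=
  (hs.2 φ).resolve_right fun hn => hs.1 ⟨φ, h, .mem hn⟩

theorem mem_of_deriv (h : Deriv Ax φ) : φ ∈ s := hs.mem_of_derivFrom (.thm h)

theorem mem_of_imp_mem (h₁ : φ.imp ψ ∈ s) (h₂ : φ ∈ s) : ψ ∈ s :=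
  hs.mem_of_derivFrom (.mp (.mem h₁) (.mem h₂))

theorem neg_mem_iff : φ.neg ∈ s ↔ φ ∉ s :=
  ⟨fun hn hm => hs.1 ⟨φ, .mem hm, .mem hn⟩, (hs.2 φ).resolve_left⟩

theorem and_mem_iff : φ.and ψ ∈ s ↔ φ ∈ s ∧ ψ ∈ s :=
  ⟨fun h => ⟨hs.mem_of_imp_mem (hs.mem_of_deriv (.taut (Tautology.and_left φ ψ))) h,
      hs.mem_of_imp_mem (hs.mem_of_deriv (.taut (Tautology.and_right φ ψ))) h⟩,
    fun ⟨h₁, h₂⟩ => hs.mem_of_imp_mem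
      (hs.mem_of_imp_mem (hs.mem_of_deriv (.taut (Tautology.and_intro φ ψ))) h₁) h₂⟩

theorem or_mem_iff : φ.or ψ ∈ s ↔ φ ∈ s ∨ ψ ∈ s := by
  simp only [Formula.or, hs.neg_mem_iff, hs.and_mem_iff]
  tauto

theorem imp_mem_iff : φ.imp ψ ∈ s ↔ (φ ∈ s → ψ ∈ s) := by
  simp only [Formula.imp, hs.neg_mem_iff, hs.and_mem_iff]
  tauto

theorem iffF_mem_iff : φ.iffF ψ ∈ s ↔ (φ ∈ s ↔ ψ ∈ s) := by
  simp only [Formula.iffF, hs.and_mem_iff, hs.imp_mem_iff, iff_def]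

theorem delta_neg_mem_iff : φ.neg.delta ∈ s ↔ φ.delta ∈ s :=
  ((hs.iffF_mem_iff).1 (hs.mem_of_deriv (.equ φ))).symm

theorem delta_or_mem_of_deltaM (hM : AxDeltaM ⊆ Ax) (h : φ.delta ∈ s) (χ : Formula P) :
    (φ.or ψ).delta ∈ s ∨ (φ.neg.or χ).delta ∈ s :=
  hs.or_mem_iff.1 (hs.mem_of_imp_mem (hs.mem_of_deriv (.ax (hM ⟨φ, ψ, χ, rfl⟩))) h)

theorem delta_and_mem_of_deltaC (hC : AxDeltaC ⊆ Ax) (hφ : φ.delta ∈ s)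
    (hψ : ψ.delta ∈ s) : (φ.and ψ).delta ∈ s :=
  hs.mem_of_imp_mem (hs.mem_of_deriv (.ax (hC ⟨φ, ψ, rfl⟩))) (hs.and_mem_iff.2 ⟨hφ, hψ⟩)

end MCS

theorem exists_mcs_superset (h : Consistent Ax Γ) : ∃ s, Γ ⊆ s ∧ MCS Ax s := by
  obtain ⟨s, hΓs, hs⟩ := zorn_subset_nonempty {t | Consistent Ax t}
    (fun c hc hchain hne => ⟨⋃₀ c, .sUnion hne hchain.directedOn hc,
      fun _ => Set.subset_sUnion_of_mem⟩) Γ h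
  refine ⟨s, hΓs, hs.prop, fun φ => or_iff_not_and_not.2 fun ⟨hφ, hnφ⟩ =>
    hs.prop ⟨φ.neg, ?_, ?_⟩⟩
  · refine .neg_of_not_consistent_insert fun hc => hφ ?_
    exact hs.eq_of_subset hc (Set.subset_insert _ _) ▸ Set.mem_insert _ _
  · refine .neg_of_not_consistent_insert fun hc => hnφ ?_
    exact hs.eq_of_subset hc (Set.subset_insert _ _) ▸ Set.mem_insert _ _

theorem deriv_of_forall_mcs (h : ∀ s, MCS Ax s → φ ∈ s) : Deriv Ax φ := by
  by_cases hc : Consistent Ax (insert φ.neg ∅)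
  · obtain ⟨s, hsub, hs⟩ := exists_mcs_superset hc
    exact absurd (h s hs) (hs.neg_mem_iff.1 (hsub (Set.mem_insert _ _)))
  · exact .mp (.taut (Tautology.not_not_elim φ))
      (DerivFrom.neg_of_not_consistent_insert hc).deriv_of_empty

def CanonicalState (Ax : Set (Formula P)) := {s : Set (Formula P) // MCS Ax s}

def proofSet (Ax : Set (Formula P)) (φ : Formula P) : Set (CanonicalState Ax) := {s | φ ∈ s.1}

theorem proofSet_neg (φ : Formula P) : proofSet Ax φ.neg = (proofSet Ax φ)ᶜ := by
  ext s; exact s.2.neg_mem_iff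

theorem proofSet_and (φ ψ : Formula P) :
    proofSet Ax (φ.and ψ) = proofSet Ax φ ∩ proofSet Ax ψ := by
  ext s; exact s.2.and_mem_iff

theorem proofSet_or (φ ψ : Formula P) :
    proofSet Ax (φ.or ψ) = proofSet Ax φ ∪ proofSet Ax ψ := by
  ext s; exact s.2.or_mem_iff

theorem delta_mem_congr (s : CanonicalState Ax) (h : proofSet Ax φ = proofSet Ax ψ) :
    φ.delta ∈ s.1 ↔ ψ.delta ∈ s.1 := by
  have hiff : Deriv Ax (φ.iffF ψ) := deriv_of_forall_mcs fun t ht =>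
    ht.iffF_mem_iff.2 (Set.ext_iff.1 h ⟨t, ht⟩)
  exact s.2.iffF_mem_iff.1 (s.2.mem_of_deriv hiff.re)

def canonicalNbhd (Ax : Set (Formula P)) (s : CanonicalState Ax) :
    Set (Set (CanonicalState Ax)) :=
  {X | ∃ φ : Formula P,
    φ.delta ∈ s.1 ∧ (∀ ψ, (φ.or ψ).delta ∈ s.1) ∧ proofSet Ax φ ⊆ X}

theorem canonicalNbhd_supersetClosed : SupersetClosed (canonicalNbhd Ax) := by
  rintro s X Y ⟨φ, hφ, hφor, hφX⟩ hXY
  exact ⟨φ, hφ, hφor, hφX.trans hXY⟩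

theorem canonicalNbhd_interClosed (hC : AxDeltaC ⊆ Ax) : InterClosed (canonicalNbhd Ax) := by
  rintro s X Y ⟨φ, hφ, hφor, hφX⟩ ⟨ψ, hψ, hψor, hψY⟩
  refine ⟨φ.and ψ, s.2.delta_and_mem_of_deltaC hC hφ hψ, fun χ => ?_, ?_⟩
  · refine (delta_mem_congr s ?_).1 (s.2.delta_and_mem_of_deltaC hC (hφor χ) (hψor χ))
    simp only [proofSet_and, proofSet_or, Set.inter_union_distrib_right]
  · rw [proofSet_and]
    exact Set.inter_subset_inter hφX hψY

theorem delta_mem_of_proofSet_mem_canonicalNbhd {s : CanonicalState Ax}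
    (h : proofSet Ax χ ∈ canonicalNbhd Ax s) : χ.delta ∈ s.1 := by
  obtain ⟨φ, -, hφor, hφχ⟩ := h
  refine (delta_mem_congr s ?_).2 (hφor χ)
  rw [proofSet_or, Set.union_eq_right.2 hφχ]

theorem delta_mem_iff_canonicalNbhd (hM : AxDeltaM ⊆ Ax) (s : CanonicalState Ax)
    (χ : Formula P) : χ.delta ∈ s.1 ↔
      proofSet Ax χ ∈ canonicalNbhd Ax s ∨ (proofSet Ax χ)ᶜ ∈ canonicalNbhd Ax s := by
  refine ⟨fun h => ?_, ?_⟩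
  · by_cases hχor : ∀ ψ, (χ.or ψ).delta ∈ s.1
    · exact .inl ⟨χ, h, hχor, subset_rfl⟩
    obtain ⟨ψ₀, hψ₀⟩ := not_forall.1 hχor
    refine .inr ⟨χ.neg, s.2.delta_neg_mem_iff.2 h, fun ψ => ?_, (proofSet_neg χ).le⟩
    exact (s.2.delta_or_mem_of_deltaM hM h ψ).resolve_left hψ₀
  · rintro (h | h)
    · exact delta_mem_of_proofSet_mem_canonicalNbhd h
    · rw [← proofSet_neg] at h
      exact s.2.delta_neg_mem_iff.1 (delta_mem_of_proofSet_mem_canonicalNbhd h)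

def canonicalModel (Ax : Set (Formula P)) (hne : Nonempty (CanonicalState Ax)) :
    NbhdModel P where
  S := CanonicalState Ax
  nonempty := hne
  N := canonicalNbhd Ax
  V p := proofSet Ax (.atom p)

theorem canonicalModel_truthSet (hM : AxDeltaM ⊆ Ax) (hne : Nonempty (CanonicalState Ax))
    (φ : Formula P) : (canonicalModel Ax hne).truthSet φ = proofSet Ax φ := by
  induction φ with
  | atom p => rfl
  | neg φ ih => exact (congrArg compl ih).trans (proofSet_neg φ).symm
  | and φ ψ ih₁ ih₂ =>
    exact (congrArg₂ (· ∩ ·) ih₁ ih₂).trans (proofSet_and φ ψ).symm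
  | delta φ ih =>
    ext s
    simp only [NbhdModel.truthSet, ih]
    exact (delta_mem_iff_canonicalNbhd hM s φ).symm

end Completeness

theorem R_strongly_complete_general {P : Type}
    (Γ : Set (Formula P)) (hcon : Consistent (AxDeltaM ∪ AxDeltaC) Γ) :
    ∃ (M : NbhdModel P) (s : M.S),
      SupersetClosed M.N ∧ InterClosed M.N ∧ ∀ φ ∈ Γ, M.sat s φ := by
  obtain ⟨s, hΓs, hs⟩ := exists_mcs_superset hcon
  have hne : Nonempty (CanonicalState (AxDeltaM ∪ AxDeltaC)) := ⟨⟨s, hs⟩⟩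
  refine ⟨canonicalModel _ hne, ⟨s, hs⟩, canonicalNbhd_supersetClosed,
    canonicalNbhd_interClosed Set.subset_union_right, fun φ hφ => ?_⟩
  show _ ∈ (canonicalModel _ hne).truthSet φ
  rw [canonicalModel_truthSet Set.subset_union_left]
  exact hΓs hφ

/-- the regular contingency logic R^Δ = E^Δ + ΔM + ΔC is strongly
complete with respect to the class of quasi-filters, i.e. (mc)-frames. -/
theorem R_strongly_complete {P : Type} [Nonempty P]
    (Γ : Set (Formula P)) (hcon : Consistent (AxDeltaM ∪ AxDeltaC) Γ) :
    ∃ (M : NbhdModel P) (s : M.S),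
      SupersetClosed M.N ∧ InterClosed M.N ∧ ∀ φ ∈ Γ, M.sat s φ :=
  R_strongly_complete_general Γ hcon
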